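/- The number of ternary trees with n nodes equals (1/(2n+1)) * binomial(3n, n). -/

import Mathlib

/-!
A nonempty ternary tree is a root together with an ordered triple of trees, and the generating
function of a product graded by total size is the product of the generating functions; hence the
generating function `G` of ternary trees by size satisfies `G = 1 + X * G ^ 3`.

For any power series with `F = 1 + X * F ^ (k + 1)`, the identity
`F ^ (r + 1) = F ^ r + X * F ^ (r + k + 1)` is a recurrence for the coefficients of the powers of
`F`, and the Raney numbers
`r / ((k + 1) * n + r) * ((k + 1) * n + r).choose n` satisfy the same recurrence with the same
initial values. For `k = 2` and `r = 1` this gives `(3 * n).choose n / (2 * n + 1)`.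
-/

/-- The three step types of a Motzkin path: H = (1,0), U = (1,1), D = (1,-1). -/
inductive Step : Type | H | U | D
deriving DecidableEq, Repr

/-- A ternary tree: either empty, or a node with left, middle and right subtrees. -/
inductive TernaryTree : Type
  | leaf : TernaryTree
  | node : TernaryTree → TernaryTree → TernaryTree → TernaryTree

/-- The number of nodes of a ternary tree. -/
def TernaryTree.size : TernaryTree → ℕ
  | .leaf => 0
  | .node a b c => 1 + a.size + b.size + c.size

open Finset PowerSeries
open Finset.HasAntidiagonal.antidiagonal (fst_le snd_le)

section SizeFibers

variable {α β : Type*} (f : α → ℕ) (g : β → ℕ)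

def fiberAddEquiv (n : ℕ) :
    {x : α × β // f x.1 + g x.2 = n} ≃
      Σ ij : antidiagonal n, {a // f a = ij.1.1} × {b // g b = ij.1.2} where
  toFun x := ⟨⟨(f x.1.1, g x.1.2), mem_antidiagonal.2 x.2⟩, ⟨x.1.1, rfl⟩, ⟨x.1.2, rfl⟩⟩
  invFun y := ⟨(y.2.1, y.2.2), by rw [y.2.1.2, y.2.2.2]; exact mem_antidiagonal.1 y.1.2⟩
  left_inv _ := rfl
  right_inv := by
    rintro ⟨⟨⟨i, j⟩, h⟩, ⟨a, ha⟩, ⟨b, hb⟩⟩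
    cases ha
    cases hb
    rfl

theorem finite_fiber_add {n : ℕ} (hf : ∀ i ≤ n, Finite {a // f a = i})
    (hg : ∀ j ≤ n, Finite {b // g b = j}) : Finite {x : α × β // f x.1 + g x.2 = n} := by
  have (ij : antidiagonal n) : Finite ({a // f a = ij.1.1} × {b // g b = ij.1.2}) :=
    have := hf _ (fst_le ij.2)
    have := hg _ (snd_le ij.2)
    inferInstance
  exact Finite.of_equiv _ (fiberAddEquiv f g n).symm

instance [∀ i, Finite {a // f a = i}] [∀ j, Finite {b // g b = j}] (n : ℕ) :
    Finite {x : α × β // f x.1 + g x.2 = n} :=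
  finite_fiber_add f g (fun _ _ => inferInstance) fun _ _ => inferInstance

theorem card_fiber_add [∀ i, Finite {a // f a = i}] [∀ j, Finite {b // g b = j}] (n : ℕ) :
    Nat.card {x : α × β // f x.1 + g x.2 = n} =
      ∑ ij ∈ antidiagonal n, Nat.card {a // f a = ij.1} * Nat.card {b // g b = ij.2} := by
  rw [Nat.card_congr (fiberAddEquiv f g n), Nat.card_sigma]
  simp only [Nat.card_prod]
  exact sum_coe_sort (antidiagonal n) fun ij =>
    Nat.card {a // f a = ij.1} * Nat.card {b // g b = ij.2}

noncomputable def countingSeries : ℚ⟦X⟧ := mk fun n => (Nat.card {a // f a = n} : ℚ)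

theorem countingSeries_add [∀ i, Finite {a // f a = i}] [∀ j, Finite {b // g b = j}] :
    countingSeries (fun x : α × β => f x.1 + g x.2) = countingSeries f * countingSeries g := by
  ext n
  simp [countingSeries, coeff_mul, card_fiber_add]

end SizeFibers

/-- The Raney number `r / ((k + 1) * n + r) * ((k + 1) * n + r).choose n`, in factorials. -/
noncomputable def raney (k r n : ℕ) : ℚ :=
  r * ((k + 1) * n + r - 1).factorial / (n.factorial * (k * n + r).factorial)

@[simp]
theorem raney_zero_left (k n : ℕ) : raney k 0 n = 0 := by simp [raney]

theorem raney_succ_zero (k r : ℕ) : raney k (r + 1) 0 = 1 := by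
  rw [raney, show (k + 1) * 0 + (r + 1) - 1 = r by omega, mul_zero, zero_add,
    Nat.factorial_succ, Nat.factorial_zero]
  push_cast
  field_simp

theorem raney_succ_succ (k r n : ℕ) :
    raney k (r + 1) (n + 1) = raney k r (n + 1) + raney k (r + k + 1) n := by
  set m := (k + 1) * n + k + r
  set l := k * n + k + r
  have hk : (k + 1) * (n + 1) = (k + 1) * n + k + 1 := by ring
  rw [raney, raney, raney, hk, show (k + 1) * n + k + 1 + (r + 1) - 1 = m + 1 by omega,
    show (k + 1) * n + k + 1 + r - 1 = m by omega, show (k + 1) * n + (r + k + 1) - 1 = m by omega,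
    show k * (n + 1) + (r + 1) = l + 1 by ring, show k * (n + 1) + r = l by ring,
    show k * n + (r + k + 1) = l + 1 by ring,
    Nat.factorial_succ m, Nat.factorial_succ l, Nat.factorial_succ n]
  simp only [m, l]
  push_cast
  field_simp
  ring

theorem raney_one (k n : ℕ) : raney k 1 n = ((k + 1) * n).choose n / (k * n + 1) := by
  rw [raney, Nat.add_sub_cancel, Nat.cast_choose ℚ (Nat.le_mul_of_pos_left n k.succ_pos),
    show (k + 1) * n - n = k * n by rw [add_mul, one_mul, Nat.add_sub_cancel], Nat.factorial_succ]
  push_cast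
  field_simp

section FunctionalEquation

variable {k : ℕ} {F : ℚ⟦X⟧}

theorem pow_succ_eq_of_eq_one_add_X_mul_pow (hF : F = 1 + X * F ^ (k + 1)) (r : ℕ) :
    F ^ (r + 1) = F ^ r + X * F ^ (r + k + 1) :=
  calc F ^ (r + 1) = F ^ r * F := pow_succ F r
    _ = F ^ r * (1 + X * F ^ (k + 1)) := by rw [← hF]
    _ = F ^ r + X * F ^ (r + k + 1) := by ring

theorem coeff_pow_of_eq_one_add_X_mul_pow (hF : F = 1 + X * F ^ (k + 1)) :
    ∀ n r, coeff n (F ^ (r + 1)) = raney k (r + 1) n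
  | 0, r => by
    have hF0 : constantCoeff F = 1 := by
      rw [hF]; simp
    rw [coeff_zero_eq_constantCoeff_apply, map_pow, hF0, one_pow, raney_succ_zero]
  | n + 1, r => by
    induction r with
    | zero =>
      rw [pow_succ_eq_of_eq_one_add_X_mul_pow hF, map_add, coeff_succ_X_mul, zero_add,
        coeff_pow_of_eq_one_add_X_mul_pow hF n k, raney_succ_succ, pow_zero, coeff_one]
      simp
    | succ r ih =>
      rw [pow_succ_eq_of_eq_one_add_X_mul_pow hF, map_add, coeff_succ_X_mul, ih,
        coeff_pow_of_eq_one_add_X_mul_pow hF n (r + 1 + k), raney_succ_succ k (r + 1) n]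

end FunctionalEquation

namespace TernaryTree

theorem size_eq_zero_iff {T : TernaryTree} : T.size = 0 ↔ T = leaf := by
  cases T <;> simp [size]

def nodeEquiv (n : ℕ) :
    {T : TernaryTree // T.size = n + 1} ≃
      {x : TernaryTree × TernaryTree × TernaryTree //
        x.1.size + (x.2.1.size + x.2.2.size) = n} where
  toFun
    | ⟨leaf, h⟩ => absurd h (by simp [size])
    | ⟨node a b c, h⟩ => ⟨(a, b, c), by simp only [size] at h; dsimp only; omega⟩
  invFun x := ⟨node x.1.1 x.1.2.1 x.1.2.2, by simp only [size]; omega⟩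
  left_inv
    | ⟨leaf, h⟩ => absurd h (by simp [size])
    | ⟨node a b c, h⟩ => rfl
  right_inv _ := rfl

instance finite_size_fiber (n : ℕ) : Finite {T : TernaryTree // T.size = n} := by
  induction n using Nat.strong_induction_on with
  | _ n ih =>
    cases n with
    | zero =>
      simp only [size_eq_zero_iff]
      infer_instance
    | succ n =>
      have hsub : ∀ i ≤ n, Finite {T : TernaryTree // T.size = i} := fun i hi => ih i (by omega)
      have := finite_fiber_add size _ hsub fun j hj =>
        finite_fiber_add size size (fun i hi => hsub i (by omega)) fun i hi => hsub i (by omega)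
      exact Finite.of_equiv _ (nodeEquiv n).symm

theorem countingSeries_size : countingSeries size = 1 + X * countingSeries size ^ 3 := by
  ext (_ | n)
  · simp [countingSeries, size_eq_zero_iff]
  · rw [map_add, coeff_succ_X_mul, coeff_one, if_neg n.succ_ne_zero, zero_add, pow_three,
      ← countingSeries_add, ← countingSeries_add, countingSeries, countingSeries, coeff_mk,
      coeff_mk, Nat.card_congr (nodeEquiv n)]

end TernaryTree

theorem ternary_tree_count (n : ℕ) :
    Nat.card {T : TernaryTree // T.size = n} = (3 * n).choose n / (2 * n + 1) := by
  have hcount :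
      (Nat.card {T : TernaryTree // T.size = n} : ℚ) = (3 * n).choose n / (2 * n + 1) := by
    have := coeff_pow_of_eq_one_add_X_mul_pow TernaryTree.countingSeries_size n 0
    rw [pow_one, countingSeries, coeff_mk, raney_one] at this
    norm_num at this
    exact this
  have hmul : (3 * n).choose n = Nat.card {T : TernaryTree // T.size = n} * (2 * n + 1) := by
    rw [eq_div_iff (by positivity)] at hcount
    exact_mod_cast hcount.symm
  exact (Nat.div_eq_of_eq_mul_left (by omega) hmul).symm
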